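/- arXiv:1711.06428 — 3 statements merged into one kernel-verified Lean document; each statement's English description precedes it below -/
import Mathlib

section
/- Let g : 2^N → ℝ be monotone submodular with g(∅)=0, let S be a set of size k, and index S = {s_1,…,s_k} greedily with respect to g (i.e., g(s_i | {s_1,…,s_{i-1}}) ≥ g(s_j | {s_1,…,s_{i-1}}) for every j > i). Then for any k₁ ≤ k, the truncated set S' = {s_1,…,s_{k₁}} satisfies g(S') ≥ (k₁/k)·g(S). -/
/-! Write `S_t = {s₀, …, s_{t-1}}` and `δ_t = g(S_{t+1}) - g(S_t)`. The increments of a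
greedy ordering are non-increasing: for `i < j` the greedy choice gives
`g(s_j | S_i) ≤ g(s_i | S_i)`, and diminishing returns gives `g(s_j | S_j) ≤ g(s_j | S_i)`.
Since `g(∅) = 0`, `g(S_t)` is the sum of the first `t` increments, and the average of the first
`k₁` terms of a non-increasing sequence is at least the average of the first `k` terms
(Chebyshev's sum inequality against the indicator of `[0, k₁)`). -/

def Submodular {α : Type*} [DecidableEq α] (f : Finset α → ℝ) : Prop :=
  ∀ A B : Finset α, f (A ∪ B) + f (A ∩ B) ≤ f A + f B

def MonotoneFn {α : Type*} (f : Finset α → ℝ) : Prop :=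
  ∀ A B : Finset α, A ⊆ B → f A ≤ f B

open Finset

lemma Finset.range_filter_lt_of_le {k₁ k : ℕ} (h : k₁ ≤ k) :
    {i ∈ range k | i < k₁} = range k₁ := by
  ext i
  simp only [mem_filter, mem_range]
  omega

theorem AntitoneOn.natCast_mul_sum_range_le {δ : ℕ → ℝ} {k k₁ : ℕ}
    (hδ : AntitoneOn δ (Set.Iio k)) (hk₁ : k₁ ≤ k) :
    k₁ * ∑ i ∈ range k, δ i ≤ k * ∑ i ∈ range k₁, δ i := by
  have hmv : MonovaryOn δ (fun i ↦ if i < k₁ then (1 : ℝ) else 0) (range k) := by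
    intro i hi j hj hij
    simp only [coe_range, Set.mem_Iio] at hi hj
    dsimp only at hij
    split_ifs at hij <;> norm_num at hij
    exact hδ hj hi (by omega)
  have hcheb := hmv.sum_mul_sum_le_card_mul_sum
  simp only [mul_ite, mul_one, mul_zero, sum_boole, ← sum_filter, range_filter_lt_of_le hk₁,
    card_range] at hcheb
  linarith

lemma Submodular.marginal_le_of_subset {α : Type*} [DecidableEq α] {g : Finset α → ℝ}
    (hsub : Submodular g) {A B : Finset α} {x : α} (hAB : A ⊆ B) (hx : x ∉ B) :
    g (insert x B) - g B ≤ g (insert x A) - g A := by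
  have h := hsub (insert x A) B
  rw [insert_union, union_eq_right.mpr hAB, insert_inter_of_notMem hx,
    inter_eq_left.mpr hAB] at h
  linarith

section Prefix

variable {α : Type*} [DecidableEq α] {k : ℕ} (s : Fin k → α)

def prefixSet (t : ℕ) : Finset α :=
  image s {i : Fin k | (i : ℕ) < t}

@[simp]
lemma prefixSet_zero : prefixSet s 0 = ∅ := by
  simp [prefixSet]

lemma prefixSet_mono : Monotone (prefixSet s) := by
  intro a b hab
  refine image_subset_image (monotone_filter_right _ fun i _ hi ↦ ?_)
  exact hi.trans_le hab

lemma prefixSet_of_le {t : ℕ} (ht : k ≤ t) : prefixSet s t = image s univ := by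
  rw [prefixSet, filter_true_of_mem fun i _ ↦ i.isLt.trans_le ht]

lemma prefixSet_succ (i : Fin k) : prefixSet s (i + 1) = insert (s i) (prefixSet s i) := by
  rw [prefixSet, prefixSet, ← image_insert]
  congr 1
  ext m
  simp only [mem_filter, mem_univ, true_and, mem_insert, Fin.ext_iff]
  omega

lemma apply_notMem_prefixSet (hs : Function.Injective s) (i : Fin k) : s i ∉ prefixSet s i := by
  simp [prefixSet, hs.eq_iff]

def IsGreedyOrder (g : Finset α → ℝ) : Prop :=
  ∀ i j : Fin k, i < j →
    g (insert (s j) (prefixSet s i)) - g (prefixSet s i) ≤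
      g (insert (s i) (prefixSet s i)) - g (prefixSet s i)

lemma IsGreedyOrder.antitoneOn_increments {g : Finset α → ℝ} (hsub : Submodular g)
    (hs : Function.Injective s) (hgreedy : IsGreedyOrder s g) :
    AntitoneOn (fun n ↦ g (prefixSet s (n + 1)) - g (prefixSet s n)) (Set.Iio k) := by
  intro i hi j hj hij
  rcases hij.lt_or_eq with hij | rfl
  · let i' : Fin k := ⟨i, hi⟩
    let j' : Fin k := ⟨j, hj⟩
    change g (prefixSet s (j' + 1)) - g (prefixSet s j') ≤
      g (prefixSet s (i' + 1)) - g (prefixSet s i')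
    rw [prefixSet_succ, prefixSet_succ]
    calc g (insert (s j') (prefixSet s j')) - g (prefixSet s j')
        ≤ g (insert (s j') (prefixSet s i')) - g (prefixSet s i') :=
          hsub.marginal_le_of_subset (prefixSet_mono s hij.le) (apply_notMem_prefixSet s hs j')
      _ ≤ g (insert (s i') (prefixSet s i')) - g (prefixSet s i') := hgreedy i' j' hij
  · exact le_rfl

lemma sum_range_increments (g : Finset α → ℝ) (t : ℕ) :
    ∑ n ∈ range t, (g (prefixSet s (n + 1)) - g (prefixSet s n)) =
      g (prefixSet s t) - g ∅ := by
  rw [sum_range_sub (fun n ↦ g (prefixSet s n)), prefixSet_zero]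

end Prefix

theorem greedy_truncation_general {α : Type*} [DecidableEq α]
    (g : Finset α → ℝ) (hsub : Submodular g) (hempty : g ∅ = 0)
    (k : ℕ) (s : Fin k → α) (hinj : Function.Injective s)
    (pref : ℕ → Finset α)
    (hpref : ∀ t : ℕ, pref t = Finset.image s (Finset.univ.filter (fun i : Fin k => (i : ℕ) < t)))
    (hgreedy : ∀ i j : Fin k, i < j →
      g (insert (s j) (pref i)) - g (pref i) ≤ g (insert (s i) (pref i)) - g (pref i))
    (k₁ : ℕ) (hk₁ : k₁ ≤ k) :
    ((k₁ : ℝ) / k) * g (Finset.image s Finset.univ) ≤ g (pref k₁) := by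
  obtain rfl : pref = prefixSet s := funext hpref
  have hkey :=
    (IsGreedyOrder.antitoneOn_increments s hsub hinj hgreedy).natCast_mul_sum_range_le hk₁
  rw [sum_range_increments, sum_range_increments, prefixSet_of_le s le_rfl, hempty, sub_zero,
    sub_zero] at hkey
  rcases k.eq_zero_or_pos with rfl | hk
  · simp [Nat.le_zero.mp hk₁, hempty]
  · rw [div_mul_eq_mul_div, div_le_iff₀ (by exact_mod_cast hk)]
    linarith

/-- If `S` of size `k` is indexed greedily w.r.t. `g`, then the truncated set of the
first `k₁` elements has value at least `(k₁/k)·g(S)`. -/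
theorem greedy_truncation {α : Type*} [DecidableEq α]
    (g : Finset α → ℝ) (hmono : MonotoneFn g) (hsub : Submodular g) (hempty : g ∅ = 0)
    (k : ℕ) (hk : 0 < k) (s : Fin k → α) (hinj : Function.Injective s)
    (pref : ℕ → Finset α)
    (hpref : ∀ t : ℕ, pref t = Finset.image s (Finset.univ.filter (fun i : Fin k => (i : ℕ) < t)))
    (hgreedy : ∀ i j : Fin k, i < j →
      g (insert (s j) (pref i)) - g (pref i) ≤ g (insert (s i) (pref i)) - g (pref i))
    (k₁ : ℕ) (hk₁ : k₁ ≤ k) :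
    ((k₁ : ℝ) / k) * g (Finset.image s Finset.univ) ≤ g (pref k₁) :=
  greedy_truncation_general g hsub hempty k s hinj pref hpref hgreedy k₁ hk₁
end

section
/- Let F be the multilinear extension of a monotone submodular function f : 2^N → ℝ with f(∅)=0. For any x ∈ [0,1]^N and any scalar c ∈ [0,1], F(c·x) ≥ c·F(x). -/
noncomputable def multilinear {α : Type*} [Fintype α] [DecidableEq α]
    (f : Finset α → ℝ) (x : α → ℝ) : ℝ :=
  ∑ S : Finset α, f S * ((∏ i ∈ S, x i) * ∏ j ∈ Sᶜ, (1 - x j))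

/-! Scaling `x` by `c` amounts to sampling `R` with marginals `x` and then keeping each element
of `R` independently with probability `c`; hence `F(c·x) = E[g(R)]`, where `g = subsampleMean f c`
is the mean of `f` over the `c`-subsample of a set. It remains to show `c·f(T) ≤ g(T)`, by induction
on `T`: adding `a ∉ T` raises `g` by at least `c·(f(T + a) - f(T))`, because by submodularity the
marginal of `a` at any subset of `T` is at least its marginal at `T`. -/

open Finset

noncomputable def subsampleMean {α : Type*} [DecidableEq α] (f : Finset α → ℝ) (c : ℝ)
    (T : Finset α) : ℝ :=
  ∑ S ∈ T.powerset, c ^ #S * (1 - c) ^ #(T \ S) * f S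

section subsampleMean

variable {α : Type*} [DecidableEq α]

lemma sum_powerset_pow_mul_one_sub_pow (c : ℝ) (T : Finset α) :
    ∑ S ∈ T.powerset, c ^ #S * (1 - c) ^ #(T \ S) = 1 := by
  simpa [prod_const] using (prod_add (fun _ => c) (fun _ => 1 - c) T).symm

lemma subsampleMean_add_const (f : Finset α → ℝ) (c d : ℝ) (T : Finset α) :
    subsampleMean (fun S => f S + d) c T = subsampleMean f c T + d := by
  simp only [subsampleMean, mul_add, sum_add_distrib, ← sum_mul,
    sum_powerset_pow_mul_one_sub_pow, one_mul]

lemma subsampleMean_mono {f g : Finset α → ℝ} {c : ℝ} (hc0 : 0 ≤ c) (hc1 : c ≤ 1)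
    {T : Finset α} (hfg : ∀ S ⊆ T, f S ≤ g S) :
    subsampleMean f c T ≤ subsampleMean g c T :=
  sum_le_sum fun S hS => mul_le_mul_of_nonneg_left (hfg S (mem_powerset.mp hS))
    (mul_nonneg (pow_nonneg hc0 _) (pow_nonneg (sub_nonneg.mpr hc1) _))

lemma subsampleMean_insert (f : Finset α → ℝ) (c : ℝ) {a : α} {T : Finset α} (ha : a ∉ T) :
    subsampleMean f c (insert a T)
      = (1 - c) * subsampleMean f c T + c * subsampleMean (fun S => f (insert a S)) c T := by
  rw [subsampleMean, sum_powerset_insert ha, subsampleMean, subsampleMean, mul_sum, mul_sum]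
  congr 1 <;> refine sum_congr rfl fun S hS => ?_
  · have haS : a ∉ T \ S := fun h => ha (mem_sdiff.mp h).1
    rw [insert_sdiff_of_notMem _ (fun h => ha (mem_powerset.mp hS h)),
      card_insert_of_notMem haS]
    ring
  · have haS : a ∉ S := fun h => ha (mem_powerset.mp hS h)
    rw [insert_sdiff_insert, sdiff_insert_of_notMem ha, card_insert_of_notMem haS]
    ring

end subsampleMean

lemma Submodular.insert_sub_le_insert_sub {α : Type*} [DecidableEq α] {f : Finset α → ℝ}
    (hf : Submodular f) {a : α} {S T : Finset α} (hST : S ⊆ T) (ha : a ∉ T) :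
    f (insert a T) - f T ≤ f (insert a S) - f S := by
  have h := hf (insert a S) T
  rw [insert_union, union_eq_right.mpr hST, insert_inter_of_notMem ha,
    inter_eq_left.mpr hST] at h
  linarith

lemma Submodular.mul_le_subsampleMean {α : Type*} [DecidableEq α] {f : Finset α → ℝ}
    (hf : Submodular f) (hempty : f ∅ = 0) {c : ℝ} (hc0 : 0 ≤ c) (hc1 : c ≤ 1)
    (T : Finset α) : c * f T ≤ subsampleMean f c T := by
  induction T using Finset.induction_on with
  | empty => simp [subsampleMean, hempty]
  | @insert a T ha ih =>
    set Δ := f (insert a T) - f T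
    calc c * f (insert a T) = c * f T + c * Δ := by ring
      _ ≤ (1 - c) * subsampleMean f c T + c * (subsampleMean f c T + Δ) := by linarith
      _ = (1 - c) * subsampleMean f c T + c * subsampleMean (fun S => f S + Δ) c T := by
        rw [subsampleMean_add_const]
      _ ≤ (1 - c) * subsampleMean f c T + c * subsampleMean (fun S => f (insert a S)) c T := by
        gcongr
        exact subsampleMean_mono hc0 hc1 fun S hS => by
          linarith [hf.insert_sub_le_insert_sub hS ha]
      _ = subsampleMean f c (insert a T) := (subsampleMean_insert f c ha).symm

section multilinear

variable {α : Type*} [Fintype α] [DecidableEq α]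

lemma mul_multilinear (c : ℝ) (f : Finset α → ℝ) (x : α → ℝ) :
    c * multilinear f x = multilinear (fun S => c * f S) x := by
  simp only [multilinear, mul_sum, mul_assoc]

lemma multilinear_mono {f g : Finset α → ℝ} (hfg : ∀ S, f S ≤ g S) {x : α → ℝ}
    (hx : ∀ i, 0 ≤ x i ∧ x i ≤ 1) : multilinear f x ≤ multilinear g x :=
  sum_le_sum fun S _ => mul_le_mul_of_nonneg_right (hfg S) <|
    mul_nonneg (prod_nonneg fun i _ => (hx i).1) (prod_nonneg fun j _ => sub_nonneg.mpr (hx j).2)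

lemma prod_mul_mul_prod_compl_one_sub_mul (c : ℝ) (x : α → ℝ) (S : Finset α) :
    (∏ i ∈ S, c * x i) * ∏ j ∈ Sᶜ, (1 - c * x j)
      = ∑ U ∈ Sᶜ.powerset, c ^ #S * (1 - c) ^ #U *
          ((∏ i ∈ S ∪ U, x i) * ∏ j ∈ (S ∪ U)ᶜ, (1 - x j)) := by
  have hsplit : ∏ j ∈ Sᶜ, (1 - c * x j) = ∏ j ∈ Sᶜ, ((1 - c) * x j + (1 - x j)) :=
    prod_congr rfl fun j _ => by ring
  rw [hsplit, prod_add, mul_sum]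
  refine sum_congr rfl fun U hU => ?_
  have hSU : Disjoint S U := subset_compl_iff_disjoint_left.mp (mem_powerset.mp hU)
  rw [prod_union hSU, compl_union, ← sdiff_eq_inter_compl, prod_mul_distrib, prod_mul_distrib,
    prod_const, prod_const]
  ring

lemma multilinear_const_mul_eq (f : Finset α → ℝ) (c : ℝ) (x : α → ℝ) :
    multilinear f (fun i => c * x i) = multilinear (subsampleMean f c) x := by
  calc multilinear f (fun i => c * x i)
      = ∑ S, ∑ T ∈ univ.filter (S ⊆ ·),
          c ^ #S * (1 - c) ^ #(T \ S) * f S * ((∏ i ∈ T, x i) * ∏ j ∈ Tᶜ, (1 - x j)) := by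
        refine sum_congr rfl fun S _ => ?_
        rw [prod_mul_mul_prod_compl_one_sub_mul, mul_sum]
        have hdisj : ∀ U ∈ Sᶜ.powerset, Disjoint S U := fun U hU =>
          subset_compl_iff_disjoint_left.mp (mem_powerset.mp hU)
        refine sum_nbij' (S ∪ ·) (· \ S) (fun U _ => by simp) (fun T _ => by simp)
          (fun U hU => union_sdiff_cancel_left (hdisj U hU))
          (fun T hT => union_sdiff_of_subset (by simpa using hT)) fun U hU => ?_
        rw [union_sdiff_cancel_left (hdisj U hU)]
        ring
    _ = ∑ T, ∑ S ∈ T.powerset,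
          c ^ #S * (1 - c) ^ #(T \ S) * f S * ((∏ i ∈ T, x i) * ∏ j ∈ Tᶜ, (1 - x j)) :=
        sum_comm' fun S T => by simp
    _ = multilinear (subsampleMean f c) x := by
        simp only [multilinear, subsampleMean, sum_mul]

end multilinear

theorem multilinear_scale_general {α : Type*} [Fintype α] [DecidableEq α]
    (f : Finset α → ℝ) (hsub : Submodular f) (hempty : f ∅ = 0)
    (x : α → ℝ) (hx : ∀ i, 0 ≤ x i ∧ x i ≤ 1)
    (c : ℝ) (hc0 : 0 ≤ c) (hc1 : c ≤ 1) :
    c * multilinear f x ≤ multilinear f (fun i => c * x i) := by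
  rw [mul_multilinear, multilinear_const_mul_eq]
  exact multilinear_mono (hsub.mul_le_subsampleMean hempty hc0 hc1) hx

/-- For the multilinear extension `F` of a monotone submodular function,
`F(c·x) ≥ c·F(x)` for `c ∈ [0,1]` and `x ∈ [0,1]^N`. -/
theorem multilinear_scale {α : Type*} [Fintype α] [DecidableEq α]
    (f : Finset α → ℝ) (hmono : MonotoneFn f) (hsub : Submodular f) (hempty : f ∅ = 0)
    (x : α → ℝ) (hx : ∀ i, 0 ≤ x i ∧ x i ≤ 1)
    (c : ℝ) (hc0 : 0 ≤ c) (hc1 : c ≤ 1) :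
    c * multilinear f x ≤ multilinear f (fun i => c * x i) :=
  multilinear_scale_general f hsub hempty x hx c hc0 hc1
end

section
/- Let f : 2^N → ℝ be monotone submodular with f(∅)=0, let X^1, …, X^T ⊆ N, and let x = (1/T)·Σ_{t=1}^T 1_{X^t} ∈ [0,1]^N be the average of their indicator vectors. Then the multilinear extension satisfies F(x) ≥ (1 - 1/e)·(1/T)·Σ_{t=1}^T f(X^t). -/
open Finset Function

theorem Finset.prod_comp_update_of_notMem {ι M N : Type*} [DecidableEq ι] [CommMonoid N]
    {s : Finset ι} {e : ι} (he : e ∉ s) (g : M → N) (x : ι → M) (v : M) :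
    ∏ j ∈ s, g (update x e v j) = ∏ j ∈ s, g (x j) :=
  prod_congr rfl fun _ hj => by rw [update_of_ne (ne_of_mem_of_not_mem hj he)]

theorem Finset.prod_comp_update_of_mem {ι M N : Type*} [DecidableEq ι] [CommMonoid N]
    {s : Finset ι} {e : ι} (he : e ∈ s) (g : M → N) (x : ι → M) (v : M) :
    ∏ j ∈ s, g (update x e v j) = g v * ∏ j ∈ s.erase e, g (x j) := by
  rw [← mul_prod_erase s _ he, update_self, prod_comp_update_of_notMem (notMem_erase e s)]

theorem one_sub_one_sub_pow_mem_Icc {p : ℝ} (hp : p ∈ Set.Icc 0 1) (n : ℕ) :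
    1 - (1 - p) ^ n ∈ Set.Icc 0 1 :=
  ⟨sub_nonneg.2 (pow_le_one₀ (sub_nonneg.2 hp.2) (sub_le_self 1 hp.1)),
    sub_le_self 1 (pow_nonneg (sub_nonneg.2 hp.2) n)⟩

theorem Fintype.sum_sum_mul_add {G R : Type*} [AddGroup G] [Fintype G] [NonUnitalNonAssocSemiring R]
    (w g : G → R) : ∑ r, ∑ t, w t * g (t + r) = (∑ t, w t) * ∑ s, g s := by
  rw [sum_comm, sum_mul]
  exact Finset.sum_congr rfl fun t _ => by
    rw [← mul_sum]
    exact congrArg _ (Equiv.sum_comp (Equiv.addLeft t) g)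

theorem Fintype.card_filter_add_right {G : Type*} [AddGroup G] [Fintype G] (P : G → Prop)
    [DecidablePred P] (r : G) : #{t | P (t + r)} = #{t | P t} := by
  rw [card_filter, card_filter]
  exact Equiv.sum_comp (Equiv.addRight r) fun t => if P t then 1 else 0

section

variable {α : Type*} [DecidableEq α]

theorem update_mem_cube {x : α → ℝ} (hx : ∀ i, x i ∈ Set.Icc 0 1)
    (e : α) {v : ℝ} (hv : v ∈ Set.Icc 0 1) : ∀ i, update x e v i ∈ Set.Icc (0 : ℝ) 1 :=
  (forall_update_iff x (p := fun _ t => t ∈ Set.Icc (0 : ℝ) 1)).2 ⟨hv, fun i _ => hx i⟩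

theorem Submodular.comp_insert {f : Finset α → ℝ} (hf : Submodular f) (e : α) :
    Submodular (fun S => f (insert e S)) := fun A B => by
  simpa only [insert_union_distrib, insert_inter_distrib] using hf (insert e A) (insert e B)

theorem Submodular.add_insert_union_le {f : Finset α → ℝ} (hf : Submodular f) {e : α}
    {A : Finset α} (he : e ∉ A) (S : Finset α) :
    f S + f (insert e (S ∪ A)) ≤ f (insert e S) + f (S ∪ A) := by
  have hunion : insert e S ∪ (S ∪ A) = insert e (S ∪ A) := by
    rw [insert_union, ← union_assoc, union_self]
  have hinter : insert e S ∩ (S ∪ A) = S := by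
    ext a; simp only [mem_inter, mem_insert, mem_union]; grind
  simpa only [hunion, hinter, add_comm (f S)] using hf (insert e S) (S ∪ A)

/-- The marginals of `R ∪ R'`, where `R` and `R'` are independent random sets with
marginals `y` and `p • 1_A`. -/
def boost (p : ℝ) (A : Finset α) (y : α → ℝ) : α → ℝ :=
  fun i => if i ∈ A then 1 - (1 - p) * (1 - y i) else y i

theorem boost_empty (p : ℝ) (y : α → ℝ) : boost p ∅ y = y := by
  ext i; simp [boost]

theorem boost_mem_cube {p : ℝ} (hp : p ∈ Set.Icc 0 1) (A : Finset α) {y : α → ℝ}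
    (hy : ∀ i, y i ∈ Set.Icc 0 1) (i : α) : boost p A y i ∈ Set.Icc 0 1 := by
  have := hp.1; have := hp.2; have := (hy i).1; have := (hy i).2
  unfold boost
  split_ifs <;> constructor <;> nlinarith

theorem update_boost_insert (p : ℝ) {e : α} {A : Finset α} (he : e ∉ A) (y : α → ℝ) :
    update (boost p (insert e A) y) e 0 = boost p A (update y e 0) := by
  ext i
  rcases eq_or_ne i e with rfl | hie
  · simp [boost, he]
  · simp [boost, hie]

theorem boost_one_sub_pow (p : ℝ) (A : Finset α) (c : α → ℕ) :
    boost p A (fun i => 1 - (1 - p) ^ c i) =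
      fun i => 1 - (1 - p) ^ (c i + if i ∈ A then 1 else 0) := by
  ext i; by_cases hi : i ∈ A <;> simp [boost, hi, pow_succ]; ring

variable [Fintype α]

def sampleProb (x : α → ℝ) (S : Finset α) : ℝ := (∏ i ∈ S, x i) * ∏ j ∈ Sᶜ, (1 - x j)

theorem multilinear_eq_sum (f : Finset α → ℝ) (x : α → ℝ) :
    multilinear f x = ∑ S, f S * sampleProb x S := rfl

theorem sum_sampleProb (x : α → ℝ) : ∑ S, sampleProb x S = 1 := by
  simp [sampleProb, ← Fintype.prod_add]

theorem sampleProb_nonneg {x : α → ℝ} (hx : ∀ i, x i ∈ Set.Icc 0 1) (S : Finset α) :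
    0 ≤ sampleProb x S :=
  mul_nonneg (prod_nonneg fun i _ => (hx i).1) (prod_nonneg fun j _ => sub_nonneg.2 (hx j).2)

theorem sampleProb_update_of_notMem (x : α → ℝ) {e : α} {S : Finset α} (he : e ∉ S) (v : ℝ) :
    sampleProb (update x e v) S = (1 - v) * sampleProb (update x e 0) S := by
  rw [sampleProb, sampleProb, prod_update_of_notMem he, prod_update_of_notMem he,
    prod_comp_update_of_mem (mem_compl.2 he) (1 - ·),
    prod_comp_update_of_mem (mem_compl.2 he) (1 - ·)]
  ring

theorem sampleProb_update_insert (x : α → ℝ) {e : α} {S : Finset α} (he : e ∉ S) (v : ℝ) :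
    sampleProb (update x e v) (insert e S) = v * sampleProb (update x e 0) S := by
  rw [sampleProb, sampleProb, compl_insert, prod_insert he, update_self,
    prod_update_of_notMem he, prod_update_of_notMem he,
    prod_comp_update_of_notMem (notMem_erase e _) (1 - ·),
    prod_comp_update_of_mem (mem_compl.2 he) (1 - ·)]
  ring

theorem sum_finset_eq_sum_powerset_erase {M : Type*} [AddCommMonoid M] (e : α) (g : Finset α → M) :
    ∑ S, g S = ∑ S ∈ (univ.erase e).powerset, (g S + g (insert e S)) := by
  rw [sum_add_distrib, ← sum_powerset_insert (notMem_erase e univ), insert_erase (mem_univ e),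
    powerset_univ]

theorem multilinear_update (f : Finset α → ℝ) (x : α → ℝ) (e : α) (v : ℝ) :
    multilinear f (update x e v) =
      (1 - v) * multilinear f (update x e 0) +
        v * multilinear (fun S => f (insert e S)) (update x e 0) := by
  simp only [multilinear_eq_sum, sum_finset_eq_sum_powerset_erase e]
  rw [mul_sum, mul_sum, ← sum_add_distrib]
  refine sum_congr rfl fun S hS => ?_
  have he : e ∉ S := fun h => notMem_erase e univ (mem_powerset.1 hS h)
  rw [sampleProb_update_of_notMem x he v, sampleProb_update_insert x he v,
    sampleProb_update_insert x he 0, insert_idem]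
  ring

theorem multilinear_eq_pivot (f : Finset α → ℝ) (x : α → ℝ) (e : α) :
    multilinear f x =
      (1 - x e) * multilinear f (update x e 0) +
        x e * multilinear (fun S => f (insert e S)) (update x e 0) := by
  simpa using multilinear_update f x e (x e)

variable {f g : Finset α → ℝ} {x y : α → ℝ}

theorem multilinear_mono_fun (hx : ∀ i, x i ∈ Set.Icc 0 1) (h : ∀ S, f S ≤ g S) :
    multilinear f x ≤ multilinear g x :=
  sum_le_sum fun S _ => mul_le_mul_of_nonneg_right (h S) (sampleProb_nonneg hx S)

theorem multilinear_add (f g : Finset α → ℝ) (x : α → ℝ) :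
    multilinear (fun S => f S + g S) x = multilinear f x + multilinear g x := by
  simp only [multilinear_eq_sum, add_mul, sum_add_distrib]

theorem multilinear_const (c : ℝ) (x : α → ℝ) : multilinear (fun _ => c) x = c := by
  rw [multilinear_eq_sum, ← mul_sum, sum_sampleProb, mul_one]

theorem multilinear_zero (f : Finset α → ℝ) : multilinear f 0 = f ∅ := by
  rw [multilinear_eq_sum, sum_eq_single ∅]
  · simp [sampleProb]
  · intro S _ hS
    obtain ⟨a, ha⟩ := nonempty_iff_ne_empty.2 hS
    rw [sampleProb, prod_eq_zero ha rfl, zero_mul, mul_zero]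
  · simp

theorem multilinear_update_mono (hf : MonotoneFn f) (hx : ∀ i, x i ∈ Set.Icc 0 1)
    (e : α) {u v : ℝ} (huv : u ≤ v) :
    multilinear f (update x e u) ≤ multilinear f (update x e v) := by
  have hins : multilinear f (update x e 0) ≤ multilinear (fun S => f (insert e S)) (update x e 0) :=
    multilinear_mono_fun (update_mem_cube hx e (by simp)) fun S => hf _ _ (subset_insert e S)
  rw [multilinear_update f x e u, multilinear_update f x e v]
  nlinarith

theorem multilinear_mono_s9 (hf : MonotoneFn f) (hx : ∀ i, x i ∈ Set.Icc 0 1)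
    (hy : ∀ i, y i ∈ Set.Icc 0 1) (hxy : ∀ i, x i ≤ y i) : multilinear f x ≤ multilinear f y := by
  suffices h : ∀ s : Finset α, ∀ x : α → ℝ, (∀ i, x i ∈ Set.Icc 0 1) → (∀ i, x i ≤ y i) →
      (∀ i ∉ s, x i = y i) → multilinear f x ≤ multilinear f y from
    h univ x hx hxy fun i hi => absurd (mem_univ i) hi
  intro s
  induction s using Finset.induction_on with
  | empty =>
    intro x _ _ hxy
    rw [funext fun i => hxy i (notMem_empty i)]
  | insert e s _ ih =>
    intro x hx hxy hagree
    calc multilinear f x = multilinear f (update x e (x e)) := by rw [update_eq_self]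
      _ ≤ multilinear f (update x e (y e)) := multilinear_update_mono hf hx e (hxy e)
      _ ≤ multilinear f y := by
        refine ih _ (update_mem_cube hx e (hy e)) ?_ fun i hi => ?_
        · exact (forall_update_iff x (p := fun i t => t ≤ y i)).2 ⟨le_rfl, fun i _ => hxy i⟩
        · rcases eq_or_ne i e with rfl | hie
          · exact update_self ..
          · rw [update_of_ne hie, hagree i (by simp [hie, hi])]

theorem Submodular.mix_le_multilinear_boost (hf : Submodular f) {p : ℝ}
    (hp : p ∈ Set.Icc 0 1) (A : Finset α) (hy : ∀ i, y i ∈ Set.Icc 0 1) :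
    (1 - p) * multilinear f y + p * multilinear (fun S => f (S ∪ A)) y ≤
      multilinear f (boost p A y) := by
  induction A using Finset.induction_on generalizing f y with
  | empty => simp only [union_empty, boost_empty]; linarith
  | insert e A he ih =>
    set y₀ := update y e 0
    have hy₀ : ∀ i, y₀ i ∈ Set.Icc 0 1 := update_mem_cube hy e (by simp)
    have hdiminish : multilinear f y₀ + multilinear (fun S => f (insert e (S ∪ A))) y₀ ≤
        multilinear (fun S => f (insert e S)) y₀ + multilinear (fun S => f (S ∪ A)) y₀ := by
      rw [← multilinear_add, ← multilinear_add]
      exact multilinear_mono_fun hy₀ (hf.add_insert_union_le he)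
    have h₀ := ih hf hy₀
    have h₁ := ih (hf.comp_insert e) hy₀
    have hP := multilinear_eq_pivot f y e
    have hM := multilinear_eq_pivot (fun S => f (S ∪ insert e A)) y e
    have hZ := multilinear_eq_pivot f (boost p (insert e A) y) e
    simp only [union_insert, insert_union, insert_idem] at hM h₁ ⊢
    rw [update_boost_insert p he] at hZ
    have hze : boost p (insert e A) y e = 1 - (1 - p) * (1 - y e) := by simp [boost]
    have hc : 0 ≤ (1 - p) * (1 - y e) := mul_nonneg (sub_nonneg.2 hp.2) (sub_nonneg.2 (hy e).2)
    have hd : 0 ≤ 1 - (1 - p) * (1 - y e) := (boost_mem_cube hp _ hy e).1.trans_eq hze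
    rw [hP, hM, hZ, hze]
    -- the two sides differ by `p (1 - p) (1 - y e)` times the gap in `hdiminish`
    linear_combination mul_le_mul_of_nonneg_left h₀ hc + mul_le_mul_of_nonneg_left h₁ hd +
      mul_le_mul_of_nonneg_left hdiminish (mul_nonneg hc hp.1)

theorem Submodular.mix_apply_le_multilinear_boost (hf : Submodular f)
    (hmono : MonotoneFn f) {p : ℝ} (hp : p ∈ Set.Icc 0 1) (A : Finset α)
    (hy : ∀ i, y i ∈ Set.Icc 0 1) :
    (1 - p) * multilinear f y + p * f A ≤ multilinear f (boost p A y) := by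
  have hA : f A ≤ multilinear (fun S => f (S ∪ A)) y := by
    simpa only [multilinear_const] using
      multilinear_mono_fun (f := fun _ => f A) hy fun S => hmono _ _ subset_union_right
  nlinarith [hf.mix_le_multilinear_boost hp A hy, hp.1]

theorem Submodular.sum_geom_le_multilinear (hf : Submodular f)
    (hmono : MonotoneFn f) (hempty : f ∅ = 0) {p : ℝ} (hp : p ∈ Set.Icc 0 1) {m : ℕ}
    (A : Fin m → Finset α) :
    ∑ t : Fin m, p * (1 - p) ^ (t : ℕ) * f (A t) ≤
      multilinear f (fun i => 1 - (1 - p) ^ #{t | i ∈ A t}) := by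
  induction m with
  | zero => simp [← Pi.zero_def, multilinear_zero, hempty]
  | succ m ih =>
    have hstep := hf.mix_apply_le_multilinear_boost hmono hp (A 0)
      (y := fun i => 1 - (1 - p) ^ #{t : Fin m | i ∈ A t.succ})
      fun i => one_sub_one_sub_pow_mem_Icc hp _
    simp only [Fin.card_filter_univ_succ', add_comm (ite _ _ _), boost_one_sub_pow] at hstep ⊢
    calc ∑ t : Fin (m + 1), p * (1 - p) ^ (t : ℕ) * f (A t)
        = (1 - p) * ∑ t : Fin m, p * (1 - p) ^ (t : ℕ) * f (A t.succ) + p * f (A 0) := by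
          rw [Fin.sum_univ_succ, mul_sum, add_comm]
          simp only [Fin.val_succ, Fin.val_zero, pow_succ, pow_zero, mul_one]
          congr 1
          exact sum_congr rfl fun t _ => by ring
      _ ≤ _ := by
        have := mul_le_mul_of_nonneg_left (ih fun t => A t.succ) (sub_nonneg.2 hp.2)
        linarith

theorem Submodular.one_sub_pow_mul_sum_le (hf : Submodular f)
    (hmono : MonotoneFn f) (hempty : f ∅ = 0) {p : ℝ} (hp : p ∈ Set.Icc 0 1) {T : ℕ} [NeZero T]
    (X : Fin T → Finset α) :
    (1 - (1 - p) ^ T) * ∑ t, f (X t) ≤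
      T * multilinear f (fun i => 1 - (1 - p) ^ #{t | i ∈ X t}) := by
  have hgeom : ∑ t : Fin T, p * (1 - p) ^ (t : ℕ) = 1 - (1 - p) ^ T := by
    rw [← mul_sum, Fin.sum_univ_eq_sum_range (fun t => (1 - p) ^ t), ← mul_neg_geom_sum,
      sub_sub_cancel]
  calc (1 - (1 - p) ^ T) * ∑ t, f (X t)
      = ∑ r : Fin T, ∑ t : Fin T, p * (1 - p) ^ (t : ℕ) * f (X (t + r)) := by
        rw [Fintype.sum_sum_mul_add _ (fun s => f (X s)), hgeom]
    _ ≤ ∑ r : Fin T, multilinear f (fun i => 1 - (1 - p) ^ #{t | i ∈ X t}) :=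
      sum_le_sum fun r _ => by
        have hcount (i : α) : #{t | i ∈ X (t + r)} = #{t | i ∈ X t} :=
          Fintype.card_filter_add_right (fun t => i ∈ X t) r
        exact (hf.sum_geom_le_multilinear hmono hempty hp fun t => X (t + r)).trans_eq
          (by simp only [hcount])
    _ = T * multilinear f (fun i => 1 - (1 - p) ^ #{t | i ∈ X t}) := by simp

theorem multilinear_one_sub_pow_le (hf : MonotoneFn f) {p : ℝ}
    (hp : p ∈ Set.Icc 0 1) (c : α → ℕ) (hc : ∀ i, p * c i ≤ 1) :
    multilinear f (fun i => 1 - (1 - p) ^ c i) ≤ multilinear f (fun i => p * c i) := by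
  refine multilinear_mono_s9 hf (fun i => one_sub_one_sub_pow_mem_Icc hp _)
    (fun i => ⟨by have := hp.1; positivity, hc i⟩) fun i => ?_
  have := one_add_mul_le_pow (by linarith [hp.2] : -2 ≤ -p) (c i)
  rw [← sub_eq_add_neg] at this
  linarith

end

theorem multilinear_average_bound_general {α : Type*} [Fintype α] [DecidableEq α]
    (f : Finset α → ℝ) (hmono : MonotoneFn f) (hsub : Submodular f) (hempty : f ∅ = 0)
    (T : ℕ) (X : Fin T → Finset α) :
    (1 - 1 / Real.exp 1) * ((1 / (T : ℝ)) * ∑ t, f (X t)) ≤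
      multilinear f (fun i =>
        (1 / (T : ℝ)) * ∑ t, (if i ∈ X t then (1 : ℝ) else 0)) := by
  rcases T.eq_zero_or_pos with rfl | hT
  · simp [← Pi.zero_def, multilinear_zero, hempty]
  have : NeZero T := ⟨hT.ne'⟩
  have hTpos : (0 : ℝ) < T := Nat.cast_pos.2 hT
  set p := 1 / (T : ℝ)
  have hpT : p * T = 1 := one_div_mul_cancel hTpos.ne'
  have hp : p ∈ Set.Icc 0 1 := ⟨by positivity, div_le_one_of_le₀ (by exact_mod_cast hT) hTpos.le⟩
  have hexp : (1 - p) ^ T ≤ 1 / Real.exp 1 := by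
    have := Real.one_sub_div_pow_le_exp_neg (n := T) (t := 1) (by exact_mod_cast hT)
    simpa [p, Real.exp_neg] using this
  have hnonneg : 0 ≤ ∑ t, f (X t) := sum_nonneg fun t _ => hempty ▸ hmono _ _ (empty_subset _)
  have hcount (i : α) : p * #{t | i ∈ X t} ≤ 1 := by
    have hle : #{t | i ∈ X t} ≤ T := (card_le_univ _).trans_eq (Fintype.card_fin T)
    exact hpT ▸ mul_le_mul_of_nonneg_left (Nat.cast_le.2 hle) hp.1
  simp only [sum_boole]
  calc (1 - 1 / Real.exp 1) * (p * ∑ t, f (X t))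
      ≤ p * ((1 - (1 - p) ^ T) * ∑ t, f (X t)) := by
        rw [mul_left_comm]
        exact mul_le_mul_of_nonneg_left (mul_le_mul_of_nonneg_right (by linarith) hnonneg) hp.1
    _ ≤ p * (T * multilinear f (fun i => 1 - (1 - p) ^ #{t | i ∈ X t})) :=
      mul_le_mul_of_nonneg_left (hsub.one_sub_pow_mul_sum_le hmono hempty hp X) hp.1
    _ = multilinear f (fun i => 1 - (1 - p) ^ #{t | i ∈ X t}) := by rw [← mul_assoc, hpT, one_mul]
    _ ≤ _ := multilinear_one_sub_pow_le hmono hp _ hcount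

/-- If `x` is the average of the indicator vectors of `X^1, …, X^T`, then
`F(x) ≥ (1 - 1/e)·(1/T)·Σ_t f(X^t)`. -/
theorem multilinear_average_bound {α : Type*} [Fintype α] [DecidableEq α]
    (f : Finset α → ℝ) (hmono : MonotoneFn f) (hsub : Submodular f) (hempty : f ∅ = 0)
    (T : ℕ) (hT : 1 ≤ T) (X : Fin T → Finset α) :
    (1 - 1 / Real.exp 1) * ((1 / (T : ℝ)) * ∑ t, f (X t)) ≤
      multilinear f (fun i =>
        (1 / (T : ℝ)) * ∑ t, (if i ∈ X t then (1 : ℝ) else 0)) :=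
  multilinear_average_bound_general f hmono hsub hempty T X
end
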